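/- Let M be ε-differentially private and S* an invariant set with positive probability under M(x) for all x ∈ X*. Define γ* = (1/(kε)) · log max over pairs (x,x') ∈ X*×X* with d(x,x')=k of [P(M(x') ∈ S*)/P(M(x) ∈ S*)]. Then 0 ≤ γ* ≤ 1, and the constrained mechanism M*(x) ∼ M(x)|M(x) ∈ S* satisfies P(M*(x) ∈ B) ≤ exp((1+γ)kε) P(M*(x') ∈ B) for every γ ∈ [γ*, 1], all k-neighbor pairs x,x' ∈ X*, and all measurable B. -/

import Mathlib

/-!
Group privacy gives `P x B ≤ exp (k ε) P x' B` for `k`-neighbours. Applied to `B ∩ S*` it bounds the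
numerator of the conditional probability, and applied to `S*` with the roles of `x, x'` swapped
it bounds the ratio of denominators, which is at most `exp (γ* k ε)` by the very definition of `γ*`.
The latter bound also shows `γ* ≤ 1`, while closure of the neighbour pairs under swapping forces the
maximal ratio to be at least `1`, i.e. `γ* ≥ 0`.
-/

open Real

section Hamming

variable {ι : Type*} [Fintype ι] {β : ι → Type*} [∀ i, DecidableEq (β i)]

lemma exists_hammingDist_eq_one_of_hammingDist_eq_succ {x y : ∀ i, β i} {k : ℕ}
    (h : hammingDist x y = k + 1) : ∃ z, hammingDist x z = 1 ∧ hammingDist z y = k := by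
  classical
  obtain ⟨i, hi⟩ : (Finset.univ.filter fun i => x i ≠ y i).Nonempty := by
    rw [← Finset.card_pos]
    exact (congrArg (0 < ·) h).mpr k.succ_pos
  have hxy : x i ≠ y i := (Finset.mem_filter.mp hi).2
  refine ⟨Function.update x i (y i), ?_, ?_⟩
  · have : (Finset.univ.filter fun j => x j ≠ Function.update x i (y i) j) = {i} := by
      ext j
      by_cases hji : j = i <;> simp [hji, hxy]
    rw [hammingDist, this, Finset.card_singleton]
  · have : (Finset.univ.filter fun j => Function.update x i (y i) j ≠ y j)
        = (Finset.univ.filter fun j => x j ≠ y j).erase i := by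
      ext j
      by_cases hji : j = i <;> simp [hji]
    rw [hammingDist, this, Finset.card_erase_of_mem hi]
    exact congrArg (· - 1) h

lemma le_exp_mul_of_hammingDist_eq {f : (∀ i, β i) → ℝ} {ε : ℝ}
    (hf : ∀ x y, hammingDist x y = 1 → f x ≤ exp ε * f y) :
    ∀ (k : ℕ) (x y : ∀ i, β i), hammingDist x y = k → f x ≤ exp (k * ε) * f y
  | 0, x, y, h => by simp [hammingDist_eq_zero.mp h]
  | k + 1, x, y, h => by
    obtain ⟨z, hxz, hzy⟩ := exists_hammingDist_eq_one_of_hammingDist_eq_succ h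
    calc f x ≤ exp ε * f z := hf x z hxz
      _ ≤ exp ε * (exp (k * ε) * f y) :=
        mul_le_mul_of_nonneg_left (le_exp_mul_of_hammingDist_eq hf k z y hzy) (exp_pos ε).le
      _ = exp ((k + 1 : ℕ) * ε) * f y := by
        rw [← mul_assoc, ← exp_add]
        push_cast
        ring_nf

def neighbourPairs (X : Finset (∀ i, β i)) (k : ℕ) : Finset ((∀ i, β i) × (∀ i, β i)) :=
  (X ×ˢ X).filter fun p => hammingDist p.1 p.2 = k

lemma mem_neighbourPairs {X : Finset (∀ i, β i)} {k : ℕ} {p : (∀ i, β i) × (∀ i, β i)} :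
    p ∈ neighbourPairs X k ↔ p.1 ∈ X ∧ p.2 ∈ X ∧ hammingDist p.1 p.2 = k := by
  simp [neighbourPairs, and_assoc]

lemma swap_mem_neighbourPairs {X : Finset (∀ i, β i)} {k : ℕ} {p : (∀ i, β i) × (∀ i, β i)}
    (hp : p ∈ neighbourPairs X k) : p.swap ∈ neighbourPairs X k := by
  obtain ⟨h₁, h₂, hk⟩ := mem_neighbourPairs.mp hp
  exact mem_neighbourPairs.mpr ⟨h₂, h₁, hammingDist_comm p.1 p.2 ▸ hk⟩

end Hamming

lemma one_le_sup'_div_of_swap_mem {α : Type*} {s : Finset (α × α)} (hs : s.Nonempty)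
    (hswap : ∀ p ∈ s, p.swap ∈ s) {g : α → ℝ} (hg : ∀ p ∈ s, 0 < g p.1) :
    1 ≤ s.sup' hs fun p => g p.2 / g p.1 := by
  obtain ⟨p, hp⟩ := hs
  rcases le_total (g p.1) (g p.2) with hle | hle
  · exact ((one_le_div (hg p hp)).mpr hle).trans (Finset.le_sup' (fun p => g p.2 / g p.1) hp)
  · exact ((one_le_div (hg _ (hswap p hp))).mpr hle).trans
      (Finset.le_sup' (fun p => g p.2 / g p.1) (hswap p hp))

lemma div_le_mul_mul_div {a a' s s' C D : ℝ} (hs : 0 < s) (hs' : 0 < s') (hC : 0 ≤ C)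
    (ha' : 0 ≤ a') (ha : a ≤ C * a') (hss' : s' ≤ D * s) : a / s ≤ C * D * (a' / s') := by
  rw [div_le_iff₀ hs]
  calc a ≤ C * a' * (s' / s') := by rwa [div_self hs'.ne', mul_one]
    _ ≤ C * a' * (D * s / s') := by gcongr
    _ = C * D * (a' / s') * s := by ring

/-- For `c = 0` the quotient `log S / c` is the junk value `0`, but then `S = 1`. -/
lemma le_exp_mul_of_log_div_le {S c γ : ℝ} (hS : 1 ≤ S) (hSc : S ≤ exp c) (hγ : log S / c ≤ γ) :
    S ≤ exp (γ * c) := by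
  have hlog_le : log S ≤ c := (log_le_iff_le_exp (by positivity)).mpr hSc
  have hc : 0 ≤ c := (log_nonneg hS).trans hlog_le
  calc S = exp (log S / c * c) := by
        rw [div_mul_cancel_of_imp fun h => le_antisymm (h ▸ hlog_le) (log_nonneg hS),
          exp_log (by positivity)]
    _ ≤ exp (γ * c) := by gcongr

theorem constrained_mechanism_gamma_general
    {Ω : Type*} [DecidableEq Ω] {n : ℕ}
    {E : Type*} [MeasurableSpace E]
    (ε : ℝ) (hε : 0 < ε)
    (P : (Fin n → Ω) → Set E → ℝ)
    (hP_nonneg : ∀ x B, 0 ≤ P x B)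
    -- ε-differential privacy of the unconstrained mechanism M
    (hDP : ∀ x x' : Fin n → Ω,
      (Finset.univ.filter fun i => x i ≠ x' i).card = 1 →
      ∀ B : Set E, MeasurableSet B → P x B ≤ Real.exp ε * P x' B)
    -- invariant set S* and the finite invariant-conforming set X*
    (Xstar : Finset (Fin n → Ω)) (Sstar : Set E) (hSstar : MeasurableSet Sstar)
    (hpos : ∀ x ∈ Xstar, 0 < P x Sstar)
    (k : ℕ)
    -- the set of k-neighbor pairs in X* × X*, assumed nonempty
    (pairs : Finset ((Fin n → Ω) × (Fin n → Ω)))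
    (hpairs : pairs = (Xstar ×ˢ Xstar).filter fun p =>
        (Finset.univ.filter fun i => p.1 i ≠ p.2 i).card = k)
    (hne : pairs.Nonempty)
    -- γ* as defined in the theorem
    (γstar : ℝ)
    (hγstar : γstar = (1 / (k * ε)) *
      Real.log (pairs.sup' hne fun p => P p.2 Sstar / P p.1 Sstar)) :
    0 ≤ γstar ∧ γstar ≤ 1 ∧
      ∀ γ ∈ Set.Icc γstar 1,
        ∀ x ∈ Xstar, ∀ x' ∈ Xstar,
          (Finset.univ.filter fun i => x i ≠ x' i).card = k →
          ∀ B : Set E, MeasurableSet B →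
            P x (B ∩ Sstar) / P x Sstar ≤
              Real.exp ((1 + γ) * k * ε) * (P x' (B ∩ Sstar) / P x' Sstar) := by
  change pairs = neighbourPairs Xstar k at hpairs
  subst hpairs hγstar
  set S := (neighbourPairs Xstar k).sup' hne fun p => P p.2 Sstar / P p.1 Sstar
  have groupDP B (hB : MeasurableSet B) :=
    le_exp_mul_of_hammingDist_eq (f := (P · B)) (fun x y h => hDP x y h B hB) k
  have hS_ge : 1 ≤ S := one_le_sup'_div_of_swap_mem (g := (P · Sstar)) hne
    (fun _ => swap_mem_neighbourPairs) fun p hp => hpos _ (mem_neighbourPairs.mp hp).1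
  have hS_le : S ≤ exp (k * ε) := Finset.sup'_le _ _ fun p hp => by
    obtain ⟨h₁, -, hk⟩ := mem_neighbourPairs.mp hp
    rw [div_le_iff₀ (hpos _ h₁)]
    exact groupDP Sstar hSstar _ _ ((hammingDist_comm p.1 p.2).symm.trans hk)
  have hlog_le : log S ≤ k * ε := (log_le_iff_le_exp (by positivity)).mpr hS_le
  rw [one_div_mul_eq_div]
  refine ⟨div_nonneg (log_nonneg hS_ge) (by positivity), div_le_one_of_le₀ hlog_le (by positivity),
    fun γ hγ x hx x' hx' hxx' B hB => ?_⟩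
  have hratio : P x' Sstar ≤ exp (γ * (k * ε)) * P x Sstar := by
    rw [← div_le_iff₀ (hpos x hx)]
    exact (Finset.le_sup' (fun p => P p.2 Sstar / P p.1 Sstar)
      (mem_neighbourPairs (p := (x, x')) |>.mpr ⟨hx, hx', hxx'⟩)).trans
      (le_exp_mul_of_log_div_le hS_ge hS_le hγ.1)
  have hexp : exp ((1 + γ) * k * ε) = exp (k * ε) * exp (γ * (k * ε)) := by
    rw [← exp_add]; ring_nf
  rw [hexp]
  exact div_le_mul_mul_div (hpos x hx) (hpos x' hx') (exp_pos _).le (hP_nonneg _ _)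
    (groupDP _ (hB.inter hSstar) x x' hxx') hratio

/-- the sharper bound exp((1+γ)kε) for the constrained mechanism,
where γ* is defined via the maximum ratio of invariant-set probabilities over
k-neighbor pairs in the finite invariant-conforming set X*. -/
theorem constrained_mechanism_gamma
    {Ω : Type*} [Fintype Ω] [DecidableEq Ω] {n : ℕ}
    {E : Type*} [MeasurableSpace E]
    (ε : ℝ) (hε : 0 < ε)
    (P : (Fin n → Ω) → Set E → ℝ)
    (hP_nonneg : ∀ x B, 0 ≤ P x B)
    -- ε-differential privacy of the unconstrained mechanism M
    (hDP : ∀ x x' : Fin n → Ω,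
      (Finset.univ.filter fun i => x i ≠ x' i).card = 1 →
      ∀ B : Set E, MeasurableSet B → P x B ≤ Real.exp ε * P x' B)
    -- invariant set S* and the finite invariant-conforming set X*
    (Xstar : Finset (Fin n → Ω)) (Sstar : Set E) (hSstar : MeasurableSet Sstar)
    (hpos : ∀ x ∈ Xstar, 0 < P x Sstar)
    (k : ℕ) (hk : 0 < k)
    -- the set of k-neighbor pairs in X* × X*, assumed nonempty
    (pairs : Finset ((Fin n → Ω) × (Fin n → Ω)))
    (hpairs : pairs = (Xstar ×ˢ Xstar).filter fun p =>
        (Finset.univ.filter fun i => p.1 i ≠ p.2 i).card = k)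
    (hne : pairs.Nonempty)
    -- γ* as defined in the theorem
    (γstar : ℝ)
    (hγstar : γstar = (1 / (k * ε)) *
      Real.log (pairs.sup' hne fun p => P p.2 Sstar / P p.1 Sstar)) :
    0 ≤ γstar ∧ γstar ≤ 1 ∧
      ∀ γ ∈ Set.Icc γstar 1,
        ∀ x ∈ Xstar, ∀ x' ∈ Xstar,
          (Finset.univ.filter fun i => x i ≠ x' i).card = k →
          ∀ B : Set E, MeasurableSet B →
            P x (B ∩ Sstar) / P x Sstar ≤
              Real.exp ((1 + γ) * k * ε) * (P x' (B ∩ Sstar) / P x' Sstar) :=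
  constrained_mechanism_gamma_general ε hε P hP_nonneg hDP Xstar Sstar hSstar hpos k pairs hpairs
    hne γstar hγstar
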